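/- arXiv:0910.2367 — 4 statements merged into one kernel-verified Lean document; each statement's English description precedes it below -/
import Mathlib

section
/- Let X₁, …, Xₙ (n ≥ 2) be i.i.d. nonnegative random variables with continuous distribution F whose tail is regularly varying with index -1/ξ, ξ > 0. Then the risk concentration C(α) = VaR_α(X₁+⋯+Xₙ) / (n · VaR_α(X₁)) converges to n^{ξ-1} as α → 1. -/
open Filter Topology Set MeasureTheory ProbabilityTheory

/-!
The sum `S = X₁ + ⋯ + Xₙ` of i.i.d. nonnegative variables with regularly varying tail `F̄ = 1 - F`
is large only through one large summand: `P(S > t) ~ n F̄(t)`. From below, `P(S ≤ t) ≤ F(t)ⁿ`;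
from above, `{S > t}` lies in `{some Xᵢ > (1 - δ)t} ∪ {two Xᵢ > δt/n}`, and by independence the
second event has probability `O(F̄(δt/n)²) = o(F̄(t))`. Regular variation then gives
`P(S > ct) ~ n c^(-1/ξ) F̄(t)`; evaluating at `t = VaR_α(X₁)`, where `F(t) = α` by continuity,
squeezes `VaR_α(S)` between `c VaR_α(X₁)` for every `c` on either side of `n^ξ`.
-/

/-- `quantile F α = F^←(α)`, which is `VaR_α` when `F` is a distribution function. -/
noncomputable def quantile (F : ℝ → ℝ) (α : ℝ) : ℝ := sInf {x | α ≤ F x}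

def HasRegularlyVaryingTail (F : ℝ → ℝ) (ρ : ℝ) : Prop :=
  ∀ x > (0:ℝ), Tendsto (fun t => (1 - F (t * x)) / (1 - F t)) atTop (𝓝 (x ^ ρ))

structure IsNonnegDistribFun (F : ℝ → ℝ) : Prop where
  monotone : Monotone F
  eq_zero_of_neg : ∀ x < 0, F x = 0
  tendsto_atTop : Tendsto F atTop (𝓝 1)

namespace IsNonnegDistribFun

variable {F G : ℝ → ℝ} {α x c l : ℝ}

lemma le_one (hF : IsNonnegDistribFun F) (x : ℝ) : F x ≤ 1 :=
  hF.monotone.ge_of_tendsto hF.tendsto_atTop x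

/-- If `F` reached `1`, the ratio would eventually be `0 / 0 = 0`. -/
lemma lt_one_of_tendsto_tail_div (hF : IsNonnegDistribFun F) (hl : l ≠ 0)
    (h : Tendsto (fun t => (1 - F (t * c)) / (1 - F t)) atTop (𝓝 l)) (x : ℝ) : F x < 1 := by
  refine (hF.le_one x).lt_of_ne fun hx => hl (tendsto_nhds_unique h (tendsto_const_nhds.congr' ?_))
  filter_upwards [eventually_ge_atTop x] with t ht
  rw [le_antisymm (hF.le_one t) (hx ▸ hF.monotone ht), sub_self, div_zero]

lemma bddBelow_setOf_le (hF : IsNonnegDistribFun F) (hα : 0 < α) : BddBelow {x | α ≤ F x} :=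
  ⟨0, fun x hx => le_of_not_gt fun hx0 => hα.not_ge (hF.eq_zero_of_neg x hx0 ▸ hx)⟩

lemma exists_le_apply (hF : IsNonnegDistribFun F) (hα : α < 1) : ∃ x, α ≤ F x :=
  (hF.tendsto_atTop.eventually (eventually_ge_nhds hα)).exists

lemma quantile_le (hF : IsNonnegDistribFun F) (hα : 0 < α) (hx : α ≤ F x) : quantile F α ≤ x :=
  csInf_le (hF.bddBelow_setOf_le hα) hx

lemma le_quantile (hF : IsNonnegDistribFun F) (hα : α < 1) (hx : F x < α) : x ≤ quantile F α :=
  le_csInf (hF.exists_le_apply hα) fun _ hy =>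
    le_of_not_gt fun hyx => (hF.monotone hyx.le).not_gt (hx.trans_le hy)

lemma apply_quantile (hF : IsNonnegDistribFun F) (hFc : Continuous F) (hα₀ : 0 < α)
    (hα₁ : α < 1) : F (quantile F α) = α := by
  have hbdd := hF.bddBelow_setOf_le hα₀
  refine le_antisymm ?_
    ((isClosed_le continuous_const hFc).csInf_mem (hF.exists_le_apply hα₁) hbdd)
  refine le_of_tendsto (hFc.continuousWithinAt (s := Iio (quantile F α))) ?_
  filter_upwards [self_mem_nhdsWithin] with x hx
  exact (not_le.1 (notMem_of_lt_csInf (s := {x | α ≤ F x}) hx hbdd)).le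

lemma tendsto_quantile_atTop (hF : IsNonnegDistribFun F) (hlt : ∀ x, F x < 1) :
    Tendsto (quantile F) (𝓝[<] 1) atTop :=
  Filter.tendsto_atTop.2 fun M => by
    filter_upwards [Ioo_mem_nhdsLT (hlt M)] with α hα using hF.le_quantile hα.2 hα.1

lemma eventually_quantile_le_mul (hF : IsNonnegDistribFun F) (hFc : Continuous F)
    (hlt : ∀ x, F x < 1) (hG : IsNonnegDistribFun G) (hl : l < 1)
    (h : Tendsto (fun t => (1 - G (t * c)) / (1 - F t)) atTop (𝓝 l)) :
    ∀ᶠ α in 𝓝[<] 1, quantile G α ≤ c * quantile F α := by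
  filter_upwards [(hF.tendsto_quantile_atTop hlt).eventually (h.eventually (eventually_lt_nhds hl)),
    Ioo_mem_nhdsLT one_pos] with α hα hα₀₁
  rw [div_lt_one (sub_pos.2 (hlt _)), hF.apply_quantile hFc hα₀₁.1 hα₀₁.2] at hα
  rw [mul_comm]
  exact hG.quantile_le hα₀₁.1 (by linarith)

lemma eventually_mul_le_quantile (hF : IsNonnegDistribFun F) (hFc : Continuous F)
    (hlt : ∀ x, F x < 1) (hG : IsNonnegDistribFun G) (hl : 1 < l)
    (h : Tendsto (fun t => (1 - G (t * c)) / (1 - F t)) atTop (𝓝 l)) :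
    ∀ᶠ α in 𝓝[<] 1, c * quantile F α ≤ quantile G α := by
  filter_upwards [(hF.tendsto_quantile_atTop hlt).eventually (h.eventually (eventually_gt_nhds hl)),
    Ioo_mem_nhdsLT one_pos] with α hα hα₀₁
  rw [one_lt_div (sub_pos.2 (hlt _)), hF.apply_quantile hFc hα₀₁.1 hα₀₁.2] at hα
  rw [mul_comm]
  exact hG.le_quantile hα₀₁.2 (by linarith)

end IsNonnegDistribFun

section RegularVariation

variable {F G : ℝ → ℝ} {n : ℕ} {a ρ : ℝ}

lemma eventually_tail_div_tail_lt (hF1 : Tendsto F atTop (𝓝 1)) (hlt : ∀ x, F x < 1)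
    (hRV : HasRegularlyVaryingTail F ρ)
    (hup : ∀ t s, 0 ≤ s → 1 - G t ≤ n * (1 - F (t - s)) + n ^ 2 * (1 - F (s / n)) ^ 2)
    (hn : 0 < n) {δ b : ℝ} (hδ₀ : 0 < δ) (hδ₁ : δ < 1) (hb : n * (1 - δ) ^ ρ < b) :
    ∀ᶠ t in atTop, (1 - G t) / (1 - F t) < b := by
  have hδn : 0 < δ / n := by positivity
  have hsmall : Tendsto (fun t => 1 - F (t * (δ / n))) atTop (𝓝 0) := by
    simpa [Function.comp_def] using
      ((tendsto_const_nhds (x := (1:ℝ))).sub hF1).comp (tendsto_id.atTop_mul_const hδn)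
  have hbound : Tendsto (fun t => n * ((1 - F (t * (1 - δ))) / (1 - F t)) +
      n ^ 2 * ((1 - F (t * (δ / n))) * ((1 - F (t * (δ / n))) / (1 - F t)))) atTop
      (𝓝 (n * (1 - δ) ^ ρ + n ^ 2 * (0 * (δ / n) ^ ρ))) :=
    ((hRV _ (sub_pos.2 hδ₁)).const_mul _).add ((hsmall.mul (hRV _ hδn)).const_mul _)
  rw [zero_mul, mul_zero, add_zero] at hbound
  filter_upwards [hbound.eventually (eventually_lt_nhds hb), eventually_ge_atTop 0] with t hb ht
  refine lt_of_le_of_lt ?_ hb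
  have hpos : 0 < 1 - F t := sub_pos.2 (hlt t)
  rw [div_le_iff₀ hpos]
  refine (hup t (t * δ) (by positivity)).trans_eq ?_
  rw [← mul_one_sub, mul_div_assoc]
  field_simp

theorem tendsto_tail_div_tail (hF1 : Tendsto F atTop (𝓝 1)) (hlt : ∀ x, F x < 1)
    (hRV : HasRegularlyVaryingTail F ρ)
    (hlow : ∀ t, G t ≤ F t ^ n)
    (hup : ∀ t s, 0 ≤ s → 1 - G t ≤ n * (1 - F (t - s)) + n ^ 2 * (1 - F (s / n)) ^ 2)
    (hn : 0 < n) : Tendsto (fun t => (1 - G t) / (1 - F t)) atTop (𝓝 n) := by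
  refine tendsto_order.2 ⟨fun b hb => ?_, fun b hb => ?_⟩
  · have hgeom : Tendsto (fun t => ∑ k ∈ Finset.range n, F t ^ k) atTop (𝓝 n) := by
      simpa using tendsto_finsetSum (Finset.range n) fun k _ => hF1.pow k
    filter_upwards [hgeom.eventually (eventually_gt_nhds hb)] with t ht
    refine ht.trans_le ?_
    rw [le_div_iff₀ (sub_pos.2 (hlt t)), geom_sum_mul_neg]
    linarith [hlow t]
  · obtain ⟨δ, hδb, hδ⟩ : ∃ δ, n * (1 - δ) ^ ρ < b ∧ δ ∈ Ioo (0:ℝ) 1 := by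
      have hcont : ContinuousAt (fun δ : ℝ => n * (1 - δ) ^ ρ) 0 :=
        continuousAt_const.mul ((continuousAt_const.sub continuousAt_id).rpow_const
          (Or.inl (by norm_num)))
      have hlim : Tendsto (fun δ : ℝ => n * (1 - δ) ^ ρ) (𝓝[>] 0) (𝓝 n) := by
        simpa using hcont.tendsto.mono_left nhdsWithin_le_nhds
      exact ((hlim.eventually (eventually_lt_nhds hb)).and (Ioo_mem_nhdsGT one_pos)).exists
    exact eventually_tail_div_tail_lt hF1 hlt hRV hup hn hδ.1 hδ.2 hδb

lemma tendsto_tail_comp_mul_div (hGF : Tendsto (fun t => (1 - G t) / (1 - F t)) atTop (𝓝 a))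
    (hlt : ∀ x, F x < 1)
    (hRV : HasRegularlyVaryingTail F ρ)
    {c : ℝ} (hc : 0 < c) :
    Tendsto (fun t => (1 - G (t * c)) / (1 - F t)) atTop (𝓝 (a * c ^ ρ)) :=
  ((hGF.comp (tendsto_id.atTop_mul_const hc)).mul (hRV c hc)).congr fun t => by
    simp [div_mul_div_cancel₀ (sub_pos.2 (hlt _)).ne']

theorem tendsto_quantile_div_quantile (hF : IsNonnegDistribFun F) (hFc : Continuous F)
    (hlt : ∀ x, F x < 1) (hG : IsNonnegDistribFun G) (ha : 0 < a) (hρ : ρ < 0)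
    (hGF : Tendsto (fun t => (1 - G t) / (1 - F t)) atTop (𝓝 a))
    (hRV : HasRegularlyVaryingTail F ρ) :
    Tendsto (fun α => quantile G α / quantile F α) (𝓝[<] 1) (𝓝 (a ^ (-1/ρ))) := by
  have hq := hF.tendsto_quantile_atTop hlt
  have hlim := fun c (hc : 0 < c) => tendsto_tail_comp_mul_div hGF hlt hRV hc
  have hpow : 0 < a ^ (-1/ρ) := Real.rpow_pos_of_pos ha _
  have hroot : a * (a ^ (-1/ρ)) ^ ρ = 1 := by
    rw [← Real.rpow_mul ha.le, div_mul_cancel₀ _ hρ.ne, Real.rpow_neg_one, mul_inv_cancel₀ ha.ne']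
  refine tendsto_order.2 ⟨fun b hb => ?_, fun b hb => ?_⟩
  · obtain ⟨c, hbc, hca⟩ := exists_between (max_lt hb hpow)
    have hc : 0 < c := (le_max_right _ _).trans_lt hbc
    have hl : 1 < a * c ^ ρ :=
      hroot.symm.trans_lt (mul_lt_mul_of_pos_left (Real.rpow_lt_rpow_of_neg hc hca hρ) ha)
    filter_upwards [hF.eventually_mul_le_quantile hFc hlt hG hl (hlim c hc),
      hq.eventually_gt_atTop 0] with α hα hqα
    exact ((le_max_left _ _).trans_lt hbc).trans_le ((le_div_iff₀ hqα).2 hα)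
  · obtain ⟨c, hac, hcb⟩ := exists_between hb
    have hc : 0 < c := hpow.trans hac
    have hl : a * c ^ ρ < 1 :=
      (mul_lt_mul_of_pos_left (Real.rpow_lt_rpow_of_neg hpow hac hρ) ha).trans_eq hroot
    filter_upwards [hF.eventually_quantile_le_mul hFc hlt hG hl (hlim c hc),
      hq.eventually_gt_atTop 0] with α hα hqα
    exact ((div_le_iff₀ hqα).2 hα).trans_lt hcb

end RegularVariation

lemma exists_lt_or_exists_pair_lt {ι : Type*} [Fintype ι] [Nonempty ι] {x : ι → ℝ}
    (hx : ∀ i, 0 ≤ x i) {t s : ℝ} (hs : 0 ≤ s) (ht : t < ∑ i, x i) :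
    (∃ i, t - s < x i) ∨
      ∃ i j, i ≠ j ∧ s / Fintype.card ι < x i ∧ s / Fintype.card ι < x j := by
  classical
  obtain ⟨i, -, hi⟩ := Finset.exists_max_image Finset.univ x Finset.univ_nonempty
  refine (lt_or_ge (t - s) (x i)).imp (fun h => ⟨i, h⟩) fun hxi => ?_
  have hrest : s < ∑ j ∈ Finset.univ.erase i, x j := by
    have := Finset.sum_erase_add Finset.univ x (Finset.mem_univ i)
    linarith
  obtain ⟨j, hj, hjmax⟩ := Finset.exists_max_image _ x
    (Finset.nonempty_of_sum_ne_zero (hs.trans_lt hrest).ne')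
  have hsj : s / Fintype.card ι < x j := by
    rw [div_lt_iff₀ (by positivity)]
    calc s < ∑ k ∈ Finset.univ.erase i, x k := hrest
      _ ≤ ∑ _k ∈ Finset.univ.erase i, x j := Finset.sum_le_sum hjmax
      _ ≤ ∑ _k : ι, x j :=
        Finset.sum_le_sum_of_subset_of_nonneg (Finset.erase_subset _ _) fun _ _ _ => hx j
      _ = x j * Fintype.card ι := by simp [mul_comm]
  exact ⟨i, j, (Finset.ne_of_mem_erase hj).symm, hsj.trans_le (hi j (Finset.mem_univ j)), hsj⟩

section IndependentSum

variable {Ω ι : Type*} [MeasurableSpace Ω] {μ : Measure Ω} [IsProbabilityMeasure μ]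

lemma isNonnegDistribFun_measureReal_le {Y : Ω → ℝ} (h0 : ∀ ω, 0 ≤ Y ω) :
    IsNonnegDistribFun fun x => μ.real {ω | Y ω ≤ x} where
  monotone _ _ hxy := measureReal_mono fun _ h => le_trans h hxy
  eq_zero_of_neg x hx := by
    convert measureReal_empty (μ := μ)
    exact eq_empty_of_forall_notMem fun ω (h : Y ω ≤ x) => (h.trans_lt hx).not_ge (h0 ω)
  tendsto_atTop := by
    have h := tendsto_measure_iUnion_atTop (μ := μ) (s := fun x => {ω | Y ω ≤ x})
      fun _ _ hxy _ h => le_trans h hxy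
    rw [iUnion_eq_univ_iff.2 fun ω => ⟨Y ω, (le_refl (Y ω) : _)⟩, measure_univ] at h
    exact (ENNReal.tendsto_toReal ENNReal.one_ne_top).comp h

lemma measureReal_lt_eq_one_sub {Y : Ω → ℝ} (hY : Measurable Y) (x : ℝ) :
    μ.real {ω | x < Y ω} = 1 - μ.real {ω | Y ω ≤ x} := by
  rw [← probReal_compl_eq_one_sub (measurableSet_le hY measurable_const)]
  congr 1
  ext ω
  simp

variable [Fintype ι] {X : ι → Ω → ℝ} {F : ℝ → ℝ}

lemma measureReal_sum_le_le_pow (hX : iIndepFun X μ) (h0 : ∀ i ω, 0 ≤ X i ω)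
    (hF : ∀ i x, μ.real {ω | X i ω ≤ x} = F x) (t : ℝ) :
    μ.real {ω | ∑ i, X i ω ≤ t} ≤ F t ^ Fintype.card ι :=
  calc μ.real {ω | ∑ i, X i ω ≤ t} ≤ μ.real (⋂ i, {ω | X i ω ≤ t}) :=
        measureReal_mono fun ω hω => mem_iInter.2 fun i =>
          (Finset.single_le_sum (fun j _ => h0 j ω) (Finset.mem_univ i)).trans hω
    _ = ∏ i, μ.real {ω | X i ω ≤ t} := by
        rw [measureReal_def, hX.meas_iInter (s := fun i => {ω | X i ω ≤ t})
          fun i => ⟨Iic t, measurableSet_Iic, rfl⟩, ENNReal.toReal_prod]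
        rfl
    _ = F t ^ Fintype.card ι := by simp [hF]

lemma measureReal_lt_sum_le [Nonempty ι] (hX : iIndepFun X μ) (hmeas : ∀ i, Measurable (X i))
    (h0 : ∀ i ω, 0 ≤ X i ω) (hF : ∀ i x, μ.real {ω | X i ω ≤ x} = F x) {t s : ℝ} (hs : 0 ≤ s) :
    μ.real {ω | t < ∑ i, X i ω} ≤
      Fintype.card ι * (1 - F (t - s)) + Fintype.card ι ^ 2 * (1 - F (s / Fintype.card ι)) ^ 2 := by
  classical
  set n := Fintype.card ι
  set B : ι → Set Ω := fun i => {ω | s / n < X i ω}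
  have htail : ∀ i x, μ.real {ω | x < X i ω} = 1 - F x := fun i x => by
    rw [measureReal_lt_eq_one_sub (hmeas i), hF]
  have hpair : ∀ p ∈ (Finset.univ : Finset ι).offDiag,
      μ.real (B p.1 ∩ B p.2) = (1 - F (s / n)) ^ 2 := by
    rintro ⟨i, j⟩ hij
    have h := (hX.indepFun (Finset.mem_offDiag.1 hij).2.2).measure_inter_preimage_eq_mul
      (Ioi (s / n)) (Ioi (s / n)) measurableSet_Ioi measurableSet_Ioi
    calc μ.real (B i ∩ B j) = μ.real (B i) * μ.real (B j) := by
          simp only [measureReal_def, ← ENNReal.toReal_mul]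
          exact congrArg ENNReal.toReal h
      _ = (1 - F (s / n)) ^ 2 := by simp only [B, htail, sq]
  have hcard : ((Finset.univ : Finset ι).offDiag.card : ℝ) ≤ n ^ 2 := by
    rw [Finset.offDiag_card, Finset.card_univ]
    exact_mod_cast (Nat.sub_le _ _).trans_eq (sq n).symm
  calc μ.real {ω | t < ∑ i, X i ω}
      ≤ μ.real ((⋃ i, {ω | t - s < X i ω}) ∪ ⋃ p ∈ Finset.univ.offDiag, B p.1 ∩ B p.2) := by
        refine measureReal_mono fun ω hω => ?_
        rcases exists_lt_or_exists_pair_lt (fun i => h0 i ω) hs hω with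
          ⟨i, hi⟩ | ⟨i, j, hij, hi, hj⟩
        · exact Or.inl (mem_iUnion.2 ⟨i, hi⟩)
        · exact Or.inr (mem_iUnion₂.2 ⟨(i, j), by simpa using hij, hi, hj⟩)
    _ ≤ ∑ i, μ.real {ω | t - s < X i ω} + ∑ p ∈ Finset.univ.offDiag, μ.real (B p.1 ∩ B p.2) :=
        (measureReal_union_le _ _).trans
          (add_le_add (measureReal_iUnion_fintype_le _) (measureReal_biUnion_finset_le _ _))
    _ = n * (1 - F (t - s)) + (Finset.univ : Finset ι).offDiag.card * (1 - F (s / n)) ^ 2 := by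
        rw [Finset.sum_congr rfl hpair]
        simp [htail, n, mul_one_sub]
    _ ≤ n * (1 - F (t - s)) + n ^ 2 * (1 - F (s / n)) ^ 2 := by gcongr

end IndependentSum

/-- For `X₁, …, Xₙ` (`n ≥ 2`) i.i.d. nonnegative random variables with continuous
distribution `F` whose tail is regularly varying with index `-1/ξ`, `ξ > 0`, the risk
concentration `C(α) = VaR_α(X₁+⋯+Xₙ)/(n · VaR_α(X₁))` converges to `n^(ξ-1)` as `α → 1⁻`. -/
theorem stmt2 {Ω : Type*} [MeasureSpace Ω] [IsProbabilityMeasure (ℙ : Measure Ω)]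
    (n : ℕ) (hn : 2 ≤ n) (X : Fin n → Ω → ℝ)
    (hmeas : ∀ i, Measurable (X i))
    (hnonneg : ∀ i ω, 0 ≤ X i ω)
    (hindep : iIndepFun X ℙ)
    (F G : ℝ → ℝ)
    (hident : ∀ i x, ℙ {ω | X i ω ≤ x} = ℙ {ω | X ⟨0, by omega⟩ ω ≤ x})
    (hF : ∀ x, F x = (ℙ {ω | X ⟨0, by omega⟩ ω ≤ x}).toReal)
    (hG : ∀ x, G x = (ℙ {ω | (∑ i, X i ω) ≤ x}).toReal)
    (hcont : Continuous F)
    (ξ : ℝ) (hξ : 0 < ξ)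
    (hRV : ∀ x > (0:ℝ), Tendsto (fun t => (1 - F (t * x)) / (1 - F t)) atTop
      (𝓝 (x ^ (-1/ξ)))) :
    Tendsto (fun α => sInf {x : ℝ | α ≤ G x} / ((n : ℝ) * sInf {x : ℝ | α ≤ F x}))
      (𝓝[<] (1:ℝ)) (𝓝 ((n : ℝ) ^ (ξ - 1))) := by
  have : Nonempty (Fin n) := ⟨⟨0, by omega⟩⟩
  have hFX : ∀ i x, (ℙ : Measure Ω).real {ω | X i ω ≤ x} = F x := fun i x => by
    rw [hF, measureReal_def, hident]
  have hF' : IsNonnegDistribFun F :=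
    (funext hF).symm ▸ isNonnegDistribFun_measureReal_le (hnonneg _)
  have hG' : IsNonnegDistribFun G := (funext hG).symm ▸
    isNonnegDistribFun_measureReal_le fun ω => Finset.sum_nonneg fun i _ => hnonneg i ω
  have hFlt : ∀ x, F x < 1 :=
    hF'.lt_one_of_tendsto_tail_div (Real.rpow_pos_of_pos two_pos _).ne' (hRV 2 two_pos)
  have htail : Tendsto (fun t => (1 - G t) / (1 - F t)) atTop (𝓝 n) := by
    refine tendsto_tail_div_tail hF'.tendsto_atTop hFlt hRV (fun t => ?_) (fun t s hs => ?_)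
      (by omega)
    · rw [hG, ← measureReal_def]
      simpa using measureReal_sum_le_le_pow hindep hnonneg hFX t
    · rw [hG, ← measureReal_def,
        ← measureReal_lt_eq_one_sub (Finset.measurable_sum _ fun i _ => hmeas i)]
      simpa using measureReal_lt_sum_le hindep hmeas hnonneg hFX (t := t) hs
  have hratio := tendsto_quantile_div_quantile hF' hcont hFlt hG' (by positivity)
    (div_neg_of_neg_of_pos neg_one_lt_zero hξ) htail hRV
  rw [show -1 / (-1/ξ) = ξ by field_simp] at hratio
  convert hratio.div_const (n : ℝ) using 2 with α
  · exact div_mul_eq_div_div_swap _ _ _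
  · exact Real.rpow_sub_one (by positivity) ξ
end

section
/- Let U(t) = t^ξ L(t) with L slowly varying, differentiable with ultimately monotone derivative L', and suppose U ∈ 2RV_{ξ,ρ}(a) with ξ > 0, ρ ≤ 0 and auxiliary function a of ultimately constant sign. Then a(t) ~ tU'(t)/U(t) - ξ as t → ∞; in particular ã(t) = tU'(t)/U(t) - ξ is also a valid auxiliary function for U. -/
open Filter Topology Set

/-!
Writing `U t = t ^ ξ * L t`, one has `t U'/U - ξ = t L'/L` and
`U (t s) / U t - s ^ ξ = s ^ ξ (L (t s) - L t) / L t`, so the second-order condition says that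
`(L (t s) - L t) / (a t * L t) → h_ρ(s)`: `L` is of extended regular variation with auxiliary
function `a L`. By the mean value theorem and the monotonicity of `L'`, `t L'(t)` lies between
the difference quotients `(L (t s) - L t) / (s - 1)` for `s` just below and just above `1`;
dividing by `a t * L t` and letting `s → 1` gives `t L'(t) / (a t * L t) → h_ρ'(1) = 1`.
-/

theorem tendsto_of_forall_eventually_mem_uIcc {α : Type*} {l : Filter α} {g : α → ℝ} {c : ℝ}
    (h : ∀ ε > 0, ∃ u v : α → ℝ,
      ∀ᶠ t in l, u t ∈ Metric.ball c ε ∧ v t ∈ Metric.ball c ε ∧ g t ∈ uIcc (u t) (v t)) :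
    Tendsto g l (𝓝 c) := by
  refine Metric.tendsto_nhds.2 fun ε hε => ?_
  obtain ⟨u, v, huv⟩ := h ε hε
  filter_upwards [huv] with t ⟨hu, hv, hg⟩
  exact (convex_ball c ε).ordConnected.uIcc_subset hu hv hg

theorem mem_uIcc_of_monotoneOn_or_antitoneOn {g : ℝ → ℝ} {s : Set ℝ}
    (hg : MonotoneOn g s ∨ AntitoneOn g s) {x y z : ℝ} (hx : x ∈ s) (hy : y ∈ s) (hz : z ∈ s)
    (hxy : x ≤ y) (hyz : y ≤ z) : g y ∈ uIcc (g x) (g z) := by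
  rcases hg with hg | hg
  · exact Icc_subset_uIcc ⟨hg hx hy hxy, hg hy hz hyz⟩
  · exact Icc_subset_uIcc' ⟨hg hy hz hyz, hg hx hy hxy⟩

theorem exists_mul_deriv_eq_div_sub_one {f : ℝ → ℝ} (hf : Differentiable ℝ f) {t s : ℝ}
    (ht : 0 < t) (hs1 : s ≠ 1) :
    ∃ c ∈ uIoo t (t * s), t * deriv f c = (f (t * s) - f t) / (s - 1) := by
  have hts : t ≠ t * s := by simpa [ht.ne', eq_comm] using hs1
  rcases hts.lt_or_gt with hlt | hgt
  · obtain ⟨c, hc, hfc⟩ := exists_deriv_eq_slope f hlt hf.continuous.continuousOn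
      hf.differentiableOn
    refine ⟨c, by rwa [uIoo_of_lt hlt], ?_⟩
    rw [hfc]
    field_simp
  · obtain ⟨c, hc, hfc⟩ := exists_deriv_eq_slope f hgt hf.continuous.continuousOn
      hf.differentiableOn
    refine ⟨c, by rwa [uIoo_of_gt hgt], ?_⟩
    rw [hfc]
    field_simp
    ring

theorem mul_deriv_mem_uIcc_div_sub_one {f : ℝ → ℝ} {T t s₁ s₂ : ℝ} (hf : Differentiable ℝ f)
    (hmono : MonotoneOn (deriv f) (Ici T) ∨ AntitoneOn (deriv f) (Ici T))
    (ht : 0 < t) (hs₁ : s₁ ∈ Ioo 0 1) (hs₂ : 1 < s₂) (hT : T ≤ t * s₁) :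
    t * deriv f t ∈ uIcc ((f (t * s₁) - f t) / (s₁ - 1)) ((f (t * s₂) - f t) / (s₂ - 1)) := by
  obtain ⟨c₁, hc₁, hfc₁⟩ := exists_mul_deriv_eq_div_sub_one hf ht hs₁.2.ne
  obtain ⟨c₂, hc₂, hfc₂⟩ := exists_mul_deriv_eq_div_sub_one hf ht hs₂.ne'
  rw [uIoo_of_gt (by nlinarith [hs₁.2])] at hc₁
  rw [uIoo_of_lt (by nlinarith)] at hc₂
  rw [← hfc₁, ← hfc₂, ← image_const_mul_uIcc]
  refine mem_image_of_mem _ (mem_uIcc_of_monotoneOn_or_antitoneOn hmono ?_ ?_ ?_ hc₁.2.le hc₂.1.le)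
  all_goals simp only [mem_Ici]; linarith [hc₁.1, hc₂.1, hc₁.2]

/-- Monotone density theorem for extended regular variation. -/
theorem tendsto_mul_deriv_div_of_tendsto_sub_div {f b h : ℝ → ℝ} {c T : ℝ}
    (hf : Differentiable ℝ f)
    (hmono : MonotoneOn (deriv f) (Ici T) ∨ AntitoneOn (deriv f) (Ici T))
    (hfb : ∀ s > 0, Tendsto (fun t => (f (t * s) - f t) / b t) atTop (𝓝 (h s)))
    (hh : HasDerivAt h c 1) :
    Tendsto (fun t => t * deriv f t / b t) atTop (𝓝 c) := by
  have hh1 : h 1 = 0 := tendsto_nhds_unique (hfb 1 one_pos) (by simp)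
  have hquot : ∀ s > 0, Tendsto (fun t => (f (t * s) - f t) / (s - 1) / b t) atTop
      (𝓝 (slope h 1 s)) := by
    intro s hs
    rw [slope_def_field, hh1, sub_zero]
    refine ((hfb s hs).div_const (s - 1)).congr fun t => ?_
    ring
  have hslope := hasDerivAt_iff_tendsto_slope.1 hh
  refine tendsto_of_forall_eventually_mem_uIcc fun ε hε => ?_
  have hball : ∀ᶠ s in 𝓝[≠] (1 : ℝ), slope h 1 s ∈ Metric.ball c ε :=
    hslope (Metric.ball_mem_nhds c hε)
  obtain ⟨s₁, hs₁c, hs₁⟩ :=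
    ((hball.filter_mono (nhdsLT_le_nhdsNE 1)).and (Ioo_mem_nhdsLT zero_lt_one)).exists
  obtain ⟨s₂, hs₂c, hs₂⟩ :=
    ((hball.filter_mono (nhdsGT_le_nhdsNE 1)).and self_mem_nhdsWithin).exists
  refine ⟨fun t => (f (t * s₁) - f t) / (s₁ - 1) / b t,
    fun t => (f (t * s₂) - f t) / (s₂ - 1) / b t, ?_⟩
  filter_upwards [hquot s₁ hs₁.1 (Metric.isOpen_ball.mem_nhds hs₁c),
    hquot s₂ (by linarith) (Metric.isOpen_ball.mem_nhds hs₂c),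
    eventually_gt_atTop 0, eventually_ge_atTop (T / s₁)] with t h₁ h₂ ht hTt
  refine ⟨h₁, h₂, ?_⟩
  simp only [div_eq_mul_inv _ (b t), ← image_mul_const_uIcc]
  exact mem_image_of_mem _ <| mul_deriv_mem_uIcc_div_sub_one hf hmono ht hs₁ hs₂ <|
    (div_le_iff₀ hs₁.1).1 hTt

/-- The limit function `h_ρ` of second-order regular variation (a Box–Cox transform). -/
noncomputable def boxCox (ρ s : ℝ) : ℝ := if ρ = 0 then Real.log s else (s ^ ρ - 1) / ρ

theorem hasDerivAt_boxCox_one (ρ : ℝ) : HasDerivAt (boxCox ρ) 1 1 := by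
  unfold boxCox
  split_ifs with hρ
  · simpa using Real.hasDerivAt_log one_ne_zero
  · simpa [hρ] using
      ((Real.hasDerivAt_rpow_const (p := ρ) (Or.inl one_ne_zero)).sub_const 1).div_const ρ

theorem Filter.Tendsto.div_of_tendsto_div_one {α : Type*} {l : Filter α} {F G a : α → ℝ}
    {K : ℝ} (hF : Tendsto (fun t => F t / a t) l (𝓝 K))
    (hG : Tendsto (fun t => G t / a t) l (𝓝 1)) : Tendsto (fun t => F t / G t) l (𝓝 K) := by
  refine (div_one K ▸ hF.div hG one_ne_zero).congr' ?_
  filter_upwards [hG.eventually_ne one_ne_zero] with t hGa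
  have ha : a t ≠ 0 := by rintro ha; simp [ha] at hGa
  have hG : G t ≠ 0 := by rintro hG; simp [hG] at hGa
  simp only [Pi.div_apply]
  field_simp

section RegularVariation

variable {U L : ℝ → ℝ} {ξ : ℝ}

theorem mul_deriv_div_sub_eq_of_eq_rpow_mul (hU : ∀ t > 0, U t = t ^ ξ * L t) {t : ℝ}
    (ht : 0 < t) (hL : DifferentiableAt ℝ L t) (hLt : L t ≠ 0) : t * deriv U t / U t - ξ = t * deriv L t / L t := by
  have hUt : U =ᶠ[𝓝 t] fun x => x ^ ξ * L x :=
    eventually_of_mem (Ioi_mem_nhds ht) hU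
  have hd : deriv U t = ξ * t ^ (ξ - 1) * L t + t ^ ξ * deriv L t := by
    rw [hUt.deriv_eq]
    exact ((Real.hasDerivAt_rpow_const (Or.inl ht.ne')).mul hL.hasDerivAt).deriv
  have htξ : t * t ^ (ξ - 1) = t ^ ξ := by
    rw [Real.rpow_sub ht, Real.rpow_one]
    field_simp
  have htξ0 : t ^ ξ ≠ 0 := (Real.rpow_pos_of_pos ht ξ).ne'
  rw [hd, hU t ht]
  field_simp
  linear_combination (ξ * L t) * htξ

theorem div_sub_rpow_eq_of_eq_rpow_mul (hU : ∀ t > 0, U t = t ^ ξ * L t) {t s : ℝ}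
    (ht : 0 < t) (hs : 0 < s) (hLt : L t ≠ 0) :
    U (t * s) / U t - s ^ ξ = s ^ ξ * ((L (t * s) - L t) / L t) := by
  have htξ : t ^ ξ ≠ 0 := (Real.rpow_pos_of_pos ht ξ).ne'
  rw [hU t ht, hU (t * s) (mul_pos ht hs), Real.mul_rpow ht.le hs.le]
  field_simp

theorem tendsto_sub_div_mul_boxCox (hU : ∀ t > 0, U t = t ^ ξ * L t)
    (hL : ∀ᶠ t in atTop, L t ≠ 0) {a : ℝ → ℝ} {ρ s : ℝ} (hs : 0 < s)
    (h2RV : Tendsto (fun t => (U (t * s) / U t - s ^ ξ) / a t) atTop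
      (𝓝 (if ρ = 0 then s ^ ξ * Real.log s else s ^ ξ * (s ^ ρ - 1) / ρ))) :
    Tendsto (fun t => (L (t * s) - L t) / (a t * L t)) atTop (𝓝 (boxCox ρ s)) := by
  have hsξ : s ^ ξ ≠ 0 := (Real.rpow_pos_of_pos hs ξ).ne'
  have hlim : (s ^ ξ)⁻¹ * (if ρ = 0 then s ^ ξ * Real.log s else s ^ ξ * (s ^ ρ - 1) / ρ)
      = boxCox ρ s := by
    unfold boxCox
    split_ifs <;> field_simp
  refine hlim ▸ (h2RV.const_mul (s ^ ξ)⁻¹).congr' ?_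
  filter_upwards [hL, eventually_gt_atTop 0] with t hLt ht
  rw [div_sub_rpow_eq_of_eq_rpow_mul hU ht hs hLt]
  field_simp

end RegularVariation

theorem stmt8_general (U L a : ℝ → ℝ) (ξ ρ : ℝ)
    (hU : ∀ t > (0:ℝ), U t = t ^ ξ * L t)
    (hL : ∀ x > (0:ℝ), Tendsto (fun t => L (t * x) / L t) atTop (𝓝 1))
    (hdiff : Differentiable ℝ L)
    (hmono : ∃ T : ℝ, MonotoneOn (deriv L) (Ici T) ∨ AntitoneOn (deriv L) (Ici T))
    (h2RV : ∀ s > (0:ℝ), Tendsto (fun t => (U (t * s) / U t - s ^ ξ) / a t) atTop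
      (𝓝 (if ρ = 0 then s ^ ξ * Real.log s else s ^ ξ * (s ^ ρ - 1) / ρ))) :
    Tendsto (fun t => (t * deriv U t / U t - ξ) / a t) atTop (𝓝 1) ∧
    ∀ s > (0:ℝ), Tendsto
      (fun t => (U (t * s) / U t - s ^ ξ) / (t * deriv U t / U t - ξ)) atTop
      (𝓝 (if ρ = 0 then s ^ ξ * Real.log s else s ^ ξ * (s ^ ρ - 1) / ρ)) := by
  obtain ⟨T, hmonoT⟩ := hmono
  have hLne : ∀ᶠ t in atTop, L t ≠ 0 := by
    filter_upwards [(hL 1 one_pos).eventually_ne one_ne_zero] with t ht hLt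
    simp [hLt] at ht
  have hequiv : Tendsto (fun t => (t * deriv U t / U t - ξ) / a t) atTop (𝓝 1) := by
    refine (tendsto_mul_deriv_div_of_tendsto_sub_div hdiff hmonoT
      (fun s hs => tendsto_sub_div_mul_boxCox hU hLne hs (h2RV s hs))
      (hasDerivAt_boxCox_one ρ)).congr' ?_
    filter_upwards [hLne, eventually_gt_atTop 0] with t hLt ht
    rw [mul_deriv_div_sub_eq_of_eq_rpow_mul hU ht (hdiff t) hLt, div_div, mul_comm (L t)]
  exact ⟨hequiv, fun s hs => (h2RV s hs).div_of_tendsto_div_one hequiv⟩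

/-- If `U(t) = t^ξ L(t)` with `L` slowly varying, differentiable with ultimately monotone
derivative, and `U ∈ 2RV_{ξ,ρ}(a)` with auxiliary function `a` of ultimately constant sign,
then `a(t) ~ tU'(t)/U(t) - ξ`; in particular `tU'(t)/U(t) - ξ` is also a valid auxiliary
function for `U`. -/
theorem stmt8 (U L a : ℝ → ℝ) (ξ ρ : ℝ) (hξ : 0 < ξ) (hρ : ρ ≤ 0)
    (hU : ∀ t > (0:ℝ), U t = t ^ ξ * L t)
    (hL : ∀ x > (0:ℝ), Tendsto (fun t => L (t * x) / L t) atTop (𝓝 1))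
    (hdiff : Differentiable ℝ L)
    (hmono : ∃ T : ℝ, MonotoneOn (deriv L) (Ici T) ∨ AntitoneOn (deriv L) (Ici T))
    (ha0 : Tendsto a atTop (𝓝 0))
    (hsign : ∃ T : ℝ, (∀ t ≥ T, 0 < a t) ∨ ∀ t ≥ T, a t < 0)
    (h2RV : ∀ s > (0:ℝ), Tendsto (fun t => (U (t * s) / U t - s ^ ξ) / a t) atTop
      (𝓝 (if ρ = 0 then s ^ ξ * Real.log s else s ^ ξ * (s ^ ρ - 1) / ρ))) :
    Tendsto (fun t => (t * deriv U t / U t - ξ) / a t) atTop (𝓝 1) ∧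
    ∀ s > (0:ℝ), Tendsto
      (fun t => (U (t * s) / U t - s ^ ξ) / (t * deriv U t / U t - ξ)) atTop
      (𝓝 (if ρ = 0 then s ^ ξ * Real.log s else s ^ ξ * (s ^ ρ - 1) / ρ)) :=
  stmt8_general U L a ξ ρ hU hL hdiff hmono h2RV
end

section
/- Let L be slowly varying, differentiable, with ultimately monotone derivative L', and suppose L is extended regularly varying with index ρ < 0 and auxiliary function B, i.e. (L(ts) - L(t))/B(t) → (s^ρ - 1)/ρ as t → ∞ for all s > 0. Then L(∞) = lim_{t→∞} L(t) exists and is finite, f(t) := L(∞) - L(t) is regularly varying of index ρ with f(t)/B(t) → -1/ρ, and B(t) ~ tL'(t) as t → ∞. -/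
open Filter Topology Set

/-!
Put `c(t) = L(2t) - L(t)`. Extended regular variation gives
`c(2ᵏt)/B(t) → 2^{kρ}(2^ρ - 1)/ρ`, in particular `c(2t)/c(t) → 2^ρ < 1`, so the dyadic
increments decay geometrically. Replacing `(L, B)` by `(-L, -B)` we may assume `L'` is
eventually antitone, i.e. `L` is eventually concave. A tangent line of negative slope would
push `L(2ⁿt)` to `-∞`, against the convergence of `L(2ⁿt) = L(t) + Σ c(2ᵏt)`; hence `L` is
eventually nondecreasing, `L(∞)` exists and `f(t) = L(∞) - L(t) = Σₖ c(2ᵏt)`. Dominated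
convergence for this series yields `f(t)/B(t) → Σₖ 2^{kρ}(2^ρ - 1)/ρ = -1/ρ`, and regular
variation of `f` follows. Finally concavity gives `L(ts) - L(t) ≤ (s - 1) t L'(t)` for every
`s > 0`; dividing by `f(t)` and letting `s → 1` from either side squeezes `t L'(t)/f(t)` to the
derivative `-ρ` of `1 - s^ρ` at `1`.
-/

def IsERV (L B : ℝ → ℝ) (ρ : ℝ) : Prop :=
  ∀ s > (0:ℝ), Tendsto (fun t => (L (t * s) - L t) / B t) atTop (𝓝 ((s ^ ρ - 1) / ρ))

def IsRegularlyVarying (f : ℝ → ℝ) (ρ : ℝ) : Prop :=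
  ∀ x > (0:ℝ), Tendsto (fun t => f (t * x) / f t) atTop (𝓝 (x ^ ρ))

theorem tendsto_of_sub_le_mul_of_hasDerivAt {α : Type*} {l : Filter α} {h : α → ℝ}
    {G : ℝ → α → ℝ} {φ : ℝ → ℝ} {x₀ d : ℝ} (hφ : HasDerivAt φ d x₀)
    (hG : ∀ᶠ s in 𝓝 x₀, Tendsto (G s) l (𝓝 (φ s)))
    (hle : ∀ᶠ s in 𝓝 x₀, ∀ᶠ t in l, G s t - φ x₀ ≤ (s - x₀) * h t) :
    Tendsto h l (𝓝 d) := by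
  have hslope := hasDerivAt_iff_tendsto_slope.1 hφ
  have hquot : ∀ s, Tendsto (G s) l (𝓝 (φ s)) →
      Tendsto (fun t => (G s t - φ x₀) / (s - x₀)) l (𝓝 (slope φ x₀ s)) := fun s hs => by
    rw [slope_def_field]; exact (hs.sub_const _).div_const _
  refine tendsto_order.2 ⟨fun a ha => ?_, fun b hb => ?_⟩
  · obtain ⟨s, has, hGs, hles, hs⟩ :=
      (((hslope.mono_left (nhdsGT_le_nhdsNE x₀)).eventually (lt_mem_nhds ha)).and
        ((eventually_nhdsWithin_of_eventually_nhds hG).and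
          ((eventually_nhdsWithin_of_eventually_nhds hle).and self_mem_nhdsWithin))).exists
    filter_upwards [(hquot s hGs).eventually (lt_mem_nhds has), hles] with t h1 h2
    exact h1.trans_le ((div_le_iff₀ (sub_pos.2 hs)).2 (by linarith))
  · obtain ⟨s, hbs, hGs, hles, hs⟩ :=
      (((hslope.mono_left (nhdsLT_le_nhdsNE x₀)).eventually (gt_mem_nhds hb)).and
        ((eventually_nhdsWithin_of_eventually_nhds hG).and
          ((eventually_nhdsWithin_of_eventually_nhds hle).and self_mem_nhdsWithin))).exists
    filter_upwards [(hquot s hGs).eventually (gt_mem_nhds hbs), hles] with t h1 h2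
    exact lt_of_le_of_lt ((le_div_iff_of_neg (sub_neg.2 hs)).2 (by linarith)) h1

theorem le_add_deriv_mul_sub_of_antitoneOn {L : ℝ → ℝ} {T x y : ℝ} (hL : Differentiable ℝ L)
    (hanti : AntitoneOn (deriv L) (Ici T)) (hx : T ≤ x) (hy : T ≤ y) :
    L y ≤ L x + deriv L x * (y - x) := by
  rcases lt_trichotomy x y with hxy | rfl | hyx
  · obtain ⟨ξ, hξ, hslope⟩ := exists_deriv_eq_slope L hxy hL.continuous.continuousOn
      hL.differentiableOn
    have : deriv L ξ ≤ deriv L x := hanti hx (hx.trans hξ.1.le) hξ.1.le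
    rw [eq_div_iff (sub_ne_zero.2 hxy.ne')] at hslope
    nlinarith
  · simp
  · obtain ⟨ξ, hξ, hslope⟩ := exists_deriv_eq_slope L hyx hL.continuous.continuousOn
      hL.differentiableOn
    have : deriv L x ≤ deriv L ξ := hanti (hy.trans hξ.1.le) hx hξ.2.le
    rw [eq_div_iff (sub_ne_zero.2 hyx.ne')] at hslope
    nlinarith

theorem monotoneOn_of_antitoneOn_deriv_of_tendsto_comp {L : ℝ → ℝ} {T a : ℝ} {u : ℕ → ℝ}
    (hL : Differentiable ℝ L) (hanti : AntitoneOn (deriv L) (Ici T))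
    (hu : Tendsto u atTop atTop) (hLu : Tendsto (L ∘ u) atTop (𝓝 a)) :
    MonotoneOn L (Ici T) := by
  refine monotoneOn_of_deriv_nonneg (convex_Ici T) hL.continuous.continuousOn
    hL.differentiableOn fun x hx => ?_
  rw [interior_Ici] at hx
  by_contra! hneg
  have htangent : Tendsto (fun n => L x + deriv L x * (u n - x)) atTop atBot :=
    tendsto_atBot_add_const_left _ _
      ((tendsto_atTop_add_const_right _ _ hu).const_mul_atTop_of_neg hneg)
  refine not_tendsto_nhds_of_tendsto_atBot (tendsto_atBot_mono' _ ?_ htangent) a hLu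
  filter_upwards [hu.eventually_ge_atTop T] with n hn
  exact le_add_deriv_mul_sub_of_antitoneOn hL hanti (le_of_lt hx) hn

theorem MonotoneOn.tendsto_atTop_of_tendsto_comp {f : ℝ → ℝ} {T a : ℝ} {u : ℕ → ℝ}
    (hf : MonotoneOn f (Ici T)) (hu : Tendsto u atTop atTop)
    (hfu : Tendsto (f ∘ u) atTop (𝓝 a)) :
    Tendsto f atTop (𝓝 a) := by
  set g : ℝ → ℝ := fun t => f (max t T)
  have hg : Monotone g := fun s t hst =>
    hf (mem_Ici.2 (le_max_right _ _)) (mem_Ici.2 (le_max_right _ _)) (max_le_max hst le_rfl)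
  have hgf : g =ᶠ[atTop] f := by
    filter_upwards [eventually_ge_atTop T] with t ht
    simp [g, max_eq_left ht]
  have hgu : Tendsto (g ∘ u) atTop (𝓝 a) := hfu.congr' (hu.eventually hgf.symm)
  rcases tendsto_atTop_of_monotone hg with htop | ⟨b, hb⟩
  · exact absurd hgu (not_tendsto_nhds_of_tendsto_atTop (htop.comp hu) a)
  · rw [tendsto_nhds_unique (hb.comp hu) hgu] at hb
    exact hb.congr' hgf

theorem eventually_forall_abs_mul_pow_le {u : ℝ → ℝ} {q r : ℝ} (hq : 1 ≤ q) (hr : 0 ≤ r)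
    (h : ∀ᶠ t in atTop, |u (t * q)| ≤ r * |u t|) :
    ∀ᶠ t in atTop, ∀ k : ℕ, |u (t * q ^ k)| ≤ r ^ k * |u t| := by
  obtain ⟨T, hT⟩ := eventually_atTop.1 h
  filter_upwards [eventually_ge_atTop T, eventually_ge_atTop 0] with t htT ht0 k
  induction k with
  | zero => simp
  | succ k ih =>
    calc |u (t * q ^ (k + 1))| = |u (t * q ^ k * q)| := by rw [pow_succ, mul_assoc]
      _ ≤ r * |u (t * q ^ k)| := hT _ (htT.trans (le_mul_of_one_le_right ht0 (one_le_pow₀ hq)))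
      _ ≤ r * (r ^ k * |u t|) := by gcongr
      _ = r ^ (k + 1) * |u t| := by ring

theorem sum_range_sub_mul_pow (L : ℝ → ℝ) (t q : ℝ) (n : ℕ) :
    ∑ k ∈ Finset.range n, (L (t * q ^ k * q) - L (t * q ^ k)) = L (t * q ^ n) - L t := by
  simp_rw [mul_assoc, ← pow_succ]
  simpa using Finset.sum_range_sub (fun k => L (t * q ^ k)) n

theorem tendsto_mul_pow_of_summable {L : ℝ → ℝ} {t q : ℝ}
    (hs : Summable fun k : ℕ => L (t * q ^ k * q) - L (t * q ^ k)) :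
    Tendsto (fun n : ℕ => L (t * q ^ n)) atTop
      (𝓝 (L t + ∑' k : ℕ, (L (t * q ^ k * q) - L (t * q ^ k)))) := by
  have := hs.hasSum.tendsto_sum_nat.const_add (L t)
  simp only [sum_range_sub_mul_pow, add_sub_cancel] at this
  exact this

theorem hasSum_sub_of_tendsto {L : ℝ → ℝ} {Linf t q : ℝ} (ht : 0 < t) (hq : 1 < q)
    (hL : Tendsto L atTop (𝓝 Linf))
    (hs : Summable fun k : ℕ => L (t * q ^ k * q) - L (t * q ^ k)) :
    HasSum (fun k : ℕ => L (t * q ^ k * q) - L (t * q ^ k)) (Linf - L t) := by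
  have hLu : Tendsto (fun n : ℕ => L (t * q ^ n)) atTop (𝓝 Linf) :=
    hL.comp ((tendsto_pow_atTop_atTop_of_one_lt hq).const_mul_atTop ht)
  convert hs.hasSum
  linarith [tendsto_nhds_unique hLu (tendsto_mul_pow_of_summable hs)]

theorem tendsto_mul_deriv_div_of_antitoneOn {L : ℝ → ℝ} {Linf ρ T : ℝ}
    (hL : Differentiable ℝ L) (hanti : AntitoneOn (deriv L) (Ici T))
    (hpos : ∀ᶠ t in atTop, 0 < Linf - L t) (hrv : IsRegularlyVarying (fun t => Linf - L t) ρ) :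
    Tendsto (fun t => t * deriv L t / (Linf - L t)) atTop (𝓝 (-ρ)) := by
  have hφ : HasDerivAt (fun s : ℝ => 1 - s ^ ρ) (-ρ) 1 := by
    have := (Real.hasDerivAt_rpow_const (p := ρ) (Or.inl one_ne_zero)).const_sub 1
    rwa [Real.one_rpow, mul_one] at this
  refine tendsto_of_sub_le_mul_of_hasDerivAt hφ
    (G := fun s t => 1 - (Linf - L (t * s)) / (Linf - L t)) ?_ ?_
  · filter_upwards [Ioi_mem_nhds one_pos] with s hs
    exact tendsto_const_nhds.sub (hrv s hs)
  · filter_upwards [Ioi_mem_nhds one_pos] with s (hs : 0 < s)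
    filter_upwards [hpos, eventually_ge_atTop T, eventually_ge_atTop (T / s)] with t hf htT htTs
    have htangent := le_add_deriv_mul_sub_of_antitoneOn hL hanti htT
      ((div_le_iff₀ hs).1 htTs)
    calc 1 - (Linf - L (t * s)) / (Linf - L t) - (1 - 1 ^ ρ)
        = (L (t * s) - L t) / (Linf - L t) := by rw [Real.one_rpow]; field_simp; ring
      _ ≤ deriv L t * (t * s - t) / (Linf - L t) := by gcongr; linarith
      _ = (s - 1) * (t * deriv L t / (Linf - L t)) := by ring

namespace IsERV

variable {L B : ℝ → ℝ} {ρ : ℝ}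

theorem neg (h : IsERV L B ρ) : IsERV (-L) (-B) ρ := fun s hs =>
  (h s hs).congr fun t => by simp only [Pi.neg_apply]; rw [← neg_div_neg_eq]; ring_nf

theorem tendsto_increment_div (h : IsERV L B ρ) (k : ℕ) :
    Tendsto (fun t => (L (t * 2 ^ k * 2) - L (t * 2 ^ k)) / B t) atTop
      (𝓝 ((2 ^ ρ) ^ k * ((2 ^ ρ - 1) / ρ))) := by
  convert (h (2 ^ (k + 1)) (by positivity)).sub (h (2 ^ k) (by positivity)) using 2 with t
  · rw [pow_succ, mul_assoc]; ring
  · rw [← Real.rpow_pow_comm zero_le_two, ← Real.rpow_pow_comm zero_le_two]; ring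

theorem eventually_ne_zero (h : IsERV L B ρ) (hρ : ρ < 0) :
    ∀ᶠ t in atTop, B t ≠ 0 ∧ L (t * 2) - L t ≠ 0 := by
  have hA : (2 ^ ρ - 1) / ρ ≠ 0 := (div_pos_of_neg_of_neg
    (by linarith [Real.rpow_lt_one_of_one_lt_of_neg one_lt_two hρ]) hρ).ne'
  filter_upwards [(h 2 two_pos).eventually_ne hA] with t ht
  exact ⟨fun hB => ht (by simp [hB]), fun hc => ht (by simp [hc])⟩

theorem exists_geometric_bound (h : IsERV L B ρ) (hρ : ρ < 0) :
    ∃ r, 0 ≤ r ∧ r < 1 ∧ ∀ᶠ t in atTop, ∀ k : ℕ,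
      |L (t * 2 ^ k * 2) - L (t * 2 ^ k)| ≤ r ^ k * |L (t * 2) - L t| := by
  have h2ρ : (2:ℝ) ^ ρ < 1 := Real.rpow_lt_one_of_one_lt_of_neg one_lt_two hρ
  have hA : (2 ^ ρ - 1) / ρ ≠ 0 := (div_pos_of_neg_of_neg (by linarith) hρ).ne'
  have hratio : Tendsto (fun t => (L (t * 2 * 2) - L (t * 2)) / (L (t * 2) - L t)) atTop
      (𝓝 (2 ^ ρ)) := by
    have := (h.tendsto_increment_div 1).div (h 2 two_pos) hA
    simp only [pow_one, mul_div_cancel_right₀ _ hA] at this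
    refine this.congr' ?_
    filter_upwards [h.eventually_ne_zero hρ] with t ht
    exact div_div_div_cancel_right₀ ht.1 _ _
  obtain ⟨r, h2ρr, hr1⟩ := exists_between h2ρ
  have hr : -r < 2 ^ ρ := by linarith [Real.rpow_pos_of_pos two_pos ρ]
  have hr0 : 0 ≤ r := by linarith
  refine ⟨r, hr0, hr1,
    eventually_forall_abs_mul_pow_le (u := fun s => L (s * 2) - L s) one_le_two hr0 ?_⟩
  filter_upwards [hratio.eventually (Ioo_mem_nhds hr h2ρr), h.eventually_ne_zero hρ]
    with t hlt ht
  have := abs_lt.2 hlt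
  rw [abs_div, div_lt_iff₀ (abs_pos.2 ht.2)] at this
  exact this.le

theorem eventually_summable (h : IsERV L B ρ) (hρ : ρ < 0) :
    ∀ᶠ t in atTop, Summable fun k : ℕ => L (t * 2 ^ k * 2) - L (t * 2 ^ k) := by
  obtain ⟨r, hr0, hr1, hbound⟩ := h.exists_geometric_bound hρ
  filter_upwards [hbound] with t ht
  exact ((summable_geometric_of_lt_one hr0 hr1).mul_right _).of_norm_bounded ht

theorem exists_tendsto_of_antitoneOn_deriv (h : IsERV L B ρ) (hρ : ρ < 0)
    (hL : Differentiable ℝ L) {T : ℝ} (hanti : AntitoneOn (deriv L) (Ici T)) :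
    ∃ Linf, Tendsto L atTop (𝓝 Linf) ∧ MonotoneOn L (Ici T) := by
  obtain ⟨t, hs, ht⟩ := ((h.eventually_summable hρ).and (eventually_gt_atTop 0)).exists
  have hu : Tendsto (fun n : ℕ => t * 2 ^ n) atTop atTop :=
    (tendsto_pow_atTop_atTop_of_one_lt one_lt_two).const_mul_atTop ht
  have hLu := tendsto_mul_pow_of_summable hs
  have hmono := monotoneOn_of_antitoneOn_deriv_of_tendsto_comp hL hanti hu hLu
  exact ⟨_, hmono.tendsto_atTop_of_tendsto_comp hu hLu, hmono⟩

theorem tendsto_sub_div (h : IsERV L B ρ) (hρ : ρ < 0) {Linf : ℝ}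
    (hLinf : Tendsto L atTop (𝓝 Linf)) :
    Tendsto (fun t => (Linf - L t) / B t) atTop (𝓝 (-1 / ρ)) := by
  obtain ⟨r, hr0, hr1, hbound⟩ := h.exists_geometric_bound hρ
  have h2ρ : (2:ℝ) ^ ρ < 1 := Real.rpow_lt_one_of_one_lt_of_neg one_lt_two hρ
  have hsum : ∑' k : ℕ, (2 ^ ρ) ^ k * ((2 ^ ρ - 1) / ρ) = -1 / ρ := by
    rw [tsum_mul_right, tsum_geometric_of_lt_one (Real.rpow_nonneg zero_le_two ρ) h2ρ]
    field_simp [(sub_pos.2 h2ρ).ne', hρ.ne]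
    rw [neg_sub]
  set A : ℝ := (2 ^ ρ - 1) / ρ
  have hdom : ∀ᶠ t in atTop, ∀ k : ℕ,
      ‖(L (t * 2 ^ k * 2) - L (t * 2 ^ k)) / B t‖ ≤ (|A| + 1) * r ^ k := by
    filter_upwards [hbound, (h 2 two_pos).abs.eventually (gt_mem_nhds (lt_add_one |A|))]
      with t ht hA k
    rw [Real.norm_eq_abs, abs_div]
    calc |L (t * 2 ^ k * 2) - L (t * 2 ^ k)| / |B t| ≤ r ^ k * |L (t * 2) - L t| / |B t| := by
          gcongr; exact ht k
      _ = r ^ k * |(L (t * 2) - L t) / B t| := by rw [abs_div, mul_div_assoc]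
      _ ≤ r ^ k * (|A| + 1) := by gcongr
      _ = (|A| + 1) * r ^ k := mul_comm _ _
  have := tendsto_tsum_of_dominated_convergence
    ((summable_geometric_of_lt_one hr0 hr1).mul_left _) h.tendsto_increment_div hdom
  rw [hsum] at this
  refine this.congr' ?_
  filter_upwards [h.eventually_summable hρ, eventually_gt_atTop 0] with t hs ht
  exact ((hasSum_sub_of_tendsto ht one_lt_two hLinf hs).div_const (B t)).tsum_eq

theorem isRegularlyVarying_sub (h : IsERV L B ρ) (hρ : ρ < 0) {Linf : ℝ}
    (hLinf : Tendsto L atTop (𝓝 Linf)) : IsRegularlyVarying (fun t => Linf - L t) ρ := by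
  intro x hx
  have hfB := h.tendsto_sub_div hρ hLinf
  have hfxB : Tendsto (fun t => (Linf - L (t * x)) / B t) atTop (𝓝 (-x ^ ρ / ρ)) := by
    convert hfB.sub (h x hx) using 2 <;> ring
  have := hfxB.div hfB (div_ne_zero (neg_ne_zero.2 one_ne_zero) hρ.ne)
  rw [div_div_div_cancel_right₀ hρ.ne, neg_div_neg_eq, div_one] at this
  refine this.congr' ?_
  filter_upwards [h.eventually_ne_zero hρ] with t ht
  exact div_div_div_cancel_right₀ ht.1 _ _

theorem tendsto_div_mul_deriv (h : IsERV L B ρ) (hρ : ρ < 0) (hL : Differentiable ℝ L)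
    {T Linf : ℝ} (hanti : AntitoneOn (deriv L) (Ici T)) (hmono : MonotoneOn L (Ici T))
    (hLinf : Tendsto L atTop (𝓝 Linf)) :
    Tendsto (fun t => B t / (t * deriv L t)) atTop (𝓝 1) := by
  have hfB := h.tendsto_sub_div hρ hLinf
  have hfB0 : -1 / ρ ≠ 0 := div_ne_zero (neg_ne_zero.2 one_ne_zero) hρ.ne
  have hpos : ∀ᶠ t in atTop, 0 < Linf - L t := by
    filter_upwards [hfB.eventually_ne hfB0, eventually_ge_atTop T] with t hne ht
    have hle : L t ≤ Linf := ge_of_tendsto hLinf <| by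
      filter_upwards [eventually_ge_atTop t] with u hu
      exact hmono ht (le_trans ht hu) hu
    exact lt_of_le_of_ne (sub_nonneg.2 hle) fun h0 => hne (by simp [← h0])
  have hdens := tendsto_mul_deriv_div_of_antitoneOn hL hanti hpos
    (h.isRegularlyVarying_sub hρ hLinf)
  have := (hfB.inv₀ hfB0).mul (hdens.inv₀ (neg_ne_zero.2 hρ.ne))
  rw [show (-1 / ρ)⁻¹ * (-ρ)⁻¹ = 1 by field_simp [hρ.ne]] at this
  refine this.congr' ?_
  filter_upwards [hpos] with t hf
  rw [inv_div, inv_div, div_mul_div_comm, mul_comm (B t), mul_div_mul_left _ _ hf.ne']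

theorem tail_asymptotics_of_antitoneOn_deriv (h : IsERV L B ρ) (hρ : ρ < 0)
    (hL : Differentiable ℝ L) {T : ℝ} (hanti : AntitoneOn (deriv L) (Ici T)) :
    ∃ Linf : ℝ, Tendsto L atTop (𝓝 Linf) ∧ IsRegularlyVarying (fun t => Linf - L t) ρ ∧
      Tendsto (fun t => (Linf - L t) / B t) atTop (𝓝 (-1 / ρ)) ∧
      Tendsto (fun t => B t / (t * deriv L t)) atTop (𝓝 1) := by
  obtain ⟨Linf, hLinf, hmono⟩ := h.exists_tendsto_of_antitoneOn_deriv hρ hL hanti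
  exact ⟨Linf, hLinf, h.isRegularlyVarying_sub hρ hLinf, h.tendsto_sub_div hρ hLinf,
    h.tendsto_div_mul_deriv hρ hL hanti hmono hLinf⟩

theorem tail_asymptotics_of_monotoneOn_deriv (h : IsERV L B ρ) (hρ : ρ < 0)
    (hL : Differentiable ℝ L) {T : ℝ} (hmono : MonotoneOn (deriv L) (Ici T)) :
    ∃ Linf : ℝ, Tendsto L atTop (𝓝 Linf) ∧ IsRegularlyVarying (fun t => Linf - L t) ρ ∧
      Tendsto (fun t => (Linf - L t) / B t) atTop (𝓝 (-1 / ρ)) ∧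
      Tendsto (fun t => B t / (t * deriv L t)) atTop (𝓝 1) := by
  obtain ⟨Linf, hLinf, hrv, hfB, hB⟩ :=
    h.neg.tail_asymptotics_of_antitoneOn_deriv hρ hL.neg (T := T)
      (by rw [deriv.neg']; exact hmono.neg)
  refine ⟨-Linf, by simpa using hLinf.neg, fun x hx => ?_, ?_, ?_⟩
  · refine (hrv x hx).congr fun t => ?_
    simp only [Pi.neg_apply]; rw [← neg_div_neg_eq]; ring_nf
  · refine hfB.congr fun t => ?_
    simp only [Pi.neg_apply]; rw [← neg_div_neg_eq]; ring_nf
  · refine hB.congr fun t => ?_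
    simp only [Pi.neg_apply, deriv.neg']; rw [mul_neg, neg_div_neg_eq]

end IsERV

theorem stmt9_general (L B : ℝ → ℝ) (ρ : ℝ) (hρ : ρ < 0)
    (hdiff : Differentiable ℝ L)
    (hmono : ∃ T : ℝ, MonotoneOn (deriv L) (Ici T) ∨ AntitoneOn (deriv L) (Ici T))
    (hERV : ∀ s > (0:ℝ), Tendsto (fun t => (L (t * s) - L t) / B t) atTop
      (𝓝 ((s ^ ρ - 1) / ρ))) :
    ∃ Linf : ℝ, Tendsto L atTop (𝓝 Linf) ∧
      (∀ x > (0:ℝ), Tendsto (fun t => (Linf - L (t * x)) / (Linf - L t)) atTop (𝓝 (x ^ ρ))) ∧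
      Tendsto (fun t => (Linf - L t) / B t) atTop (𝓝 (-1/ρ)) ∧
      Tendsto (fun t => B t / (t * deriv L t)) atTop (𝓝 1) := by
  obtain ⟨T, hmono | hanti⟩ := hmono
  · exact IsERV.tail_asymptotics_of_monotoneOn_deriv hERV hρ hdiff hmono
  · exact IsERV.tail_asymptotics_of_antitoneOn_deriv hERV hρ hdiff hanti

/-- If `L` is slowly varying, differentiable with ultimately monotone derivative, and
extended regularly varying with index `ρ < 0` and auxiliary function `B`, then
`L(∞) = lim L(t)` exists (finite), `f(t) = L(∞) - L(t)` is regularly varying of index `ρ`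
with `f(t)/B(t) → -1/ρ`, and `B(t) ~ tL'(t)`. -/
theorem stmt9 (L B : ℝ → ℝ) (ρ : ℝ) (hρ : ρ < 0)
    (hL : ∀ x > (0:ℝ), Tendsto (fun t => L (t * x) / L t) atTop (𝓝 1))
    (hdiff : Differentiable ℝ L)
    (hmono : ∃ T : ℝ, MonotoneOn (deriv L) (Ici T) ∨ AntitoneOn (deriv L) (Ici T))
    (hERV : ∀ s > (0:ℝ), Tendsto (fun t => (L (t * s) - L t) / B t) atTop
      (𝓝 ((s ^ ρ - 1) / ρ))) :
    ∃ Linf : ℝ, Tendsto L atTop (𝓝 Linf) ∧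
      (∀ x > (0:ℝ), Tendsto (fun t => (Linf - L (t * x)) / (Linf - L t)) atTop (𝓝 (x ^ ρ))) ∧
      Tendsto (fun t => (Linf - L t) / B t) atTop (𝓝 (-1/ρ)) ∧
      Tendsto (fun t => B t / (t * deriv L t)) atTop (𝓝 1) :=
  stmt9_general L B ρ hρ hdiff hmono hERV
end

section
/- Suppose U ∈ 2RV_{ξ,ρ}(a) with ξ > 0, ρ ≤ 0. Let G^←(α) = U_G(1/(1-α)) denote the quantile of the n-fold convolution G = F^{n*}, where F has tail quantile U. Writing x = G^←(α), the second-order regular variation of U implies lim_{α→1} [ U(1/F̄(x))/(n U(1/Ḡ(x))) - (1/n)(Ḡ(x)/F̄(x))^ξ ] / a(1/Ḡ(x)) = n^{ξ-1}(n^ρ - 1)/ρ, provided Ḡ(x)/F̄(x) → n as x → ∞. -/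
open Filter Topology

/-- Second-order regular variation of `U` (locally uniform, expressed via composition with
sequences `t → ∞`, `s → s₀ > 0`) together with `Ḡ(x)/F̄(x) → n` implies
`[U(1/F̄(x))/(n U(1/Ḡ(x))) - (1/n)(Ḡ(x)/F̄(x))^ξ] / a(1/Ḡ(x)) → n^(ξ-1)(n^ρ-1)/ρ`
as `x → ∞` (with `(n^ρ-1)/ρ` read as `log n` when `ρ = 0`). -/
theorem stmt12 (U a Fbar Gbar : ℝ → ℝ) (ξ ρ : ℝ) (n : ℕ) (hn : 2 ≤ n)
    (hξ : 0 < ξ) (hρ : ρ ≤ 0)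
    (h2RV : ∀ (s t : ℝ → ℝ) (s₀ : ℝ), 0 < s₀ → Tendsto t atTop atTop →
      Tendsto s atTop (𝓝 s₀) →
      Tendsto (fun u => (U (t u * s u) / U (t u) - (s u) ^ ξ) / a (t u)) atTop
        (𝓝 (if ρ = 0 then s₀ ^ ξ * Real.log s₀ else s₀ ^ ξ * (s₀ ^ ρ - 1) / ρ)))
    (hGinf : Tendsto (fun x => 1 / Gbar x) atTop atTop)
    (hratio : Tendsto (fun x => Gbar x / Fbar x) atTop (𝓝 (n : ℝ))) :
    Tendsto (fun x =>
        (U (1 / Fbar x) / ((n : ℝ) * U (1 / Gbar x))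
          - (1/(n:ℝ)) * (Gbar x / Fbar x) ^ ξ) / a (1 / Gbar x)) atTop
      (𝓝 (if ρ = 0 then (n : ℝ) ^ (ξ - 1) * Real.log n
        else (n : ℝ) ^ (ξ - 1) * ((n : ℝ) ^ ρ - 1) / ρ)) := by
  have hnpos : (0:ℝ) < (n:ℝ) := by positivity
  have hnne : (n:ℝ) ≠ 0 := hnpos.ne'
  have key := h2RV (fun x => Gbar x / Fbar x) (fun x => 1 / Gbar x) (n : ℝ) hnpos hGinf hratio
  have key2 := key.const_mul (1/(n:ℝ))
  have hlim :
      (1/(n:ℝ)) * (if ρ = 0 then (n:ℝ) ^ ξ * Real.log (n:ℝ) else (n:ℝ) ^ ξ * ((n:ℝ) ^ ρ - 1) / ρ)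
      = (if ρ = 0 then (n : ℝ) ^ (ξ - 1) * Real.log n
        else (n : ℝ) ^ (ξ - 1) * ((n : ℝ) ^ ρ - 1) / ρ) := by
    have h : (n:ℝ) ^ (ξ - 1) = (n:ℝ) ^ ξ / (n:ℝ) := by
      rw [Real.rpow_sub hnpos, Real.rpow_one]
    split_ifs <;> rw [h] <;> ring
  rw [hlim] at key2
  refine key2.congr' ?_
  filter_upwards [hGinf.eventually_gt_atTop 0] with x hx
  have hG : Gbar x ≠ 0 := by
    intro h
    rw [h] at hx; simp at hx
  have harg : (1 / Gbar x) * (Gbar x / Fbar x) = 1 / Fbar x := by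
    field_simp
  simp only [harg]
  ring
end
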